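/- arXiv:1309.1824 — 4 statements merged into one kernel-verified Lean document; each statement's English description precedes it below -/
import Mathlib

section
/- Suppose that for ψ(y) = Σᵢ₌₁ᴺ vᵢφᵢ(y) the condition '∇ψ(y)ᵀ f(u,y) ≥ 0 for all (u,y) ∈ U×Y' implies v = 0. Then there exists λᴺ ∈ ℝᴺ such that ψᴺ(y) = Σᵢ₌₁ᴺ λᴺᵢ φᵢ(y) attains the supremum in the N-approximating maximin problem, i.e. min_{y∈Y} H(∇ψᴺ(y), y) = μ*_N where μ*_N = sup_{ψ∈D_N} min_{y∈Y} H(∇ψ(y),y). -/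
/-!
For `ψ_c = ∑ cᵢ φᵢ`, the objective `J ψ_c = min_{(y,u) ∈ Y × U} (∇ψ_c(y)ᵀ f(u,y) + g(u,y))` is an
infimum over a compact set of affine functions `c ↦ ℓ_{y,u}(c) + g(u,y)` of the coefficients, hence
continuous in `c`. The nondegeneracy hypothesis says that `min ℓ(c) < 0` on the unit sphere, so by
compactness and homogeneity `min ℓ(c) ≤ -δ‖c‖`; thus `J ψ_c → -∞` as `‖c‖ → ∞` and the supremum
over the finite-dimensional space of coefficients is attained.
-/

open Filter Set Topology

theorem continuous_iInf_of_compactSpace {α γ K : Type*} [ConditionallyCompleteLinearOrder α]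
    [TopologicalSpace α] [OrderTopology α] [TopologicalSpace γ] [TopologicalSpace K]
    [CompactSpace K] {G : γ → K → α} (hG : Continuous ↿G) :
    Continuous fun x => ⨅ k, G x k := by
  have h := isCompact_univ.continuous_sInf hG
  simp only [image_univ] at h
  exact h

section InfAffine

variable {K E : Type*} [TopologicalSpace K] [CompactSpace K]
  [NormedAddCommGroup E] [NormedSpace ℝ E] {ℓ : K → StrongDual ℝ E} {b : K → ℝ}

theorem bddBelow_range_apply_add (hℓ : Continuous ℓ) (hb : Continuous b) (c : E) :
    BddBelow (range fun k => ℓ k c + b k) :=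
  (isCompact_range ((hℓ.clm_apply continuous_const).add hb)).bddBelow

theorem continuous_iInf_apply_add (hℓ : Continuous ℓ) (hb : Continuous b) :
    Continuous fun c => ⨅ k, ℓ k c + b k :=
  continuous_iInf_of_compactSpace (G := fun c k => ℓ k c + b k) (by fun_prop)

theorem exists_pos_iInf_apply_le_neg_mul_norm [Nonempty K] [FiniteDimensional ℝ E]
    [Nontrivial E] (hℓ : Continuous ℓ) (hdeg : ∀ c, (∀ k, 0 ≤ ℓ k c) → c = 0) :
    ∃ δ > 0, ∀ c, ⨅ k, ℓ k c ≤ -δ * ‖c‖ := by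
  set m : E → ℝ := fun c => ⨅ k, ℓ k c
  have hm : Continuous m := continuous_iInf_of_compactSpace (G := fun c k => ℓ k c) (by fun_prop)
  have hm_neg : ∀ v ∈ Metric.sphere (0 : E) 1, m v < 0 := by
    intro v hv
    by_contra! h
    have hv0 : v = 0 := hdeg v fun k =>
      h.trans (ciInf_le (isCompact_range (hℓ.clm_apply continuous_const)).bddBelow k)
    simp [hv0] at hv
  obtain ⟨v₀, hv₀, hmax⟩ := (isCompact_sphere (0 : E) 1).exists_isMaxOn
    (NormedSpace.sphere_nonempty.mpr zero_le_one) hm.continuousOn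
  refine ⟨-m v₀, neg_pos.mpr (hm_neg v₀ hv₀), fun c => ?_⟩
  rcases eq_or_ne c 0 with rfl | hc
  · simp
  have hnorm : 0 < ‖c‖ := norm_pos_iff.mpr hc
  have hv : ‖c‖⁻¹ • c ∈ Metric.sphere (0 : E) 1 := by
    simp [norm_smul, hnorm.ne']
  have hscale : m c = ‖c‖ * m (‖c‖⁻¹ • c) := by
    simp only [m, Real.mul_iInf_of_nonneg hnorm.le, map_smul, smul_eq_mul,
      mul_inv_cancel_left₀ hnorm.ne']
  calc m c = ‖c‖ * m (‖c‖⁻¹ • c) := hscale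
    _ ≤ ‖c‖ * m v₀ := mul_le_mul_of_nonneg_left (hmax hv) hnorm.le
    _ = - -m v₀ * ‖c‖ := by ring

theorem tendsto_iInf_apply_add_cocompact [Nonempty K] [FiniteDimensional ℝ E]
    (hℓ : Continuous ℓ) (hb : Continuous b) (hdeg : ∀ c, (∀ k, 0 ≤ ℓ k c) → c = 0) :
    Tendsto (fun c => ⨅ k, ℓ k c + b k) (cocompact E) atBot := by
  rcases subsingleton_or_nontrivial E with hE | hE
  · simp [cocompact_eq_bot]
  obtain ⟨δ, hδ, hδc⟩ := exists_pos_iInf_apply_le_neg_mul_norm hℓ hdeg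
  obtain ⟨B, hB⟩ := (isCompact_range hb).bddAbove
  have hle : ∀ c, ⨅ k, ℓ k c + b k ≤ -δ * ‖c‖ + B := fun c => by
    have : (⨅ k, ℓ k c + b k) - B ≤ ⨅ k, ℓ k c := le_ciInf fun k => by
      have := ciInf_le (bddBelow_range_apply_add hℓ hb c) k
      have := hB (mem_range_self k)
      linarith
    linarith [hδc c]
  refine tendsto_atBot_mono hle (Tendsto.atBot_add ?_ tendsto_const_nhds)
  exact tendsto_norm_cocompact_atTop.const_mul_atTop_of_neg (neg_neg_of_pos hδ)

theorem exists_forall_iInf_apply_add_le [Nonempty K] [FiniteDimensional ℝ E]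
    (hℓ : Continuous ℓ) (hb : Continuous b) (hdeg : ∀ c, (∀ k, 0 ≤ ℓ k c) → c = 0) :
    ∃ c₀, ∀ c, ⨅ k, ℓ k c + b k ≤ ⨅ k, ℓ k c₀ + b k :=
  (continuous_iInf_apply_add hℓ hb).exists_forall_ge
    (tendsto_iInf_apply_add_cocompact hℓ hb hdeg)

end InfAffine

theorem sInf_image_iInf_eq_iInf_prod {X U : Type*} [TopologicalSpace X] [TopologicalSpace U]
    [CompactSpace U] {Y : Set X} (hY : IsCompact Y) {G : X → U → ℝ} (hG : Continuous ↿G) :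
    sInf ((fun y => ⨅ u, G y u) '' Y) = ⨅ p : Y × U, G p.1 p.2 := by
  have := isCompact_iff_compactSpace.mp hY
  rw [ciInf_prod (isCompact_range (by fun_prop)).bddBelow, image_eq_range]
  rfl

theorem fderiv_sum_mul_apply {ι E : Type*} [Fintype ι] [NormedAddCommGroup E]
    [NormedSpace ℝ E] {φ : ι → E → ℝ} {y : E} (hφ : ∀ i, DifferentiableAt ℝ (φ i) y)
    (c : ι → ℝ) (v : E) :
    fderiv ℝ (fun z => ∑ i, c i * φ i z) y v = ∑ i, c i * fderiv ℝ (φ i) y v := by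
  rw [fderiv_fun_sum fun i _ => (hφ i).const_mul (c i)]
  simp [fderiv_const_mul (hφ _)]

section GradPairing

variable {ι E U : Type*} [Fintype ι] [NormedAddCommGroup E] [NormedSpace ℝ E] {f : U → E → E}

theorem ContDiff.continuous_fderiv_apply_comp [TopologicalSpace U] {ψ : E → ℝ} (hψ : ContDiff ℝ 1 ψ)
    (hf : Continuous fun p : U × E => f p.1 p.2) :
    Continuous fun p : E × U => fderiv ℝ ψ p.1 (f p.2 p.1) :=
  ((hψ.continuous_fderiv one_ne_zero).comp continuous_fst).clm_apply (hf.comp continuous_swap)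

noncomputable def gradPairing (φ : ι → E → ℝ) (f : U → E → E) (p : E × U) : StrongDual ℝ (ι → ℝ) :=
  ∑ i, fderiv ℝ (φ i) p.1 (f p.2 p.1) • ContinuousLinearMap.proj i

theorem gradPairing_apply {φ : ι → E → ℝ} (hφ : ∀ i, Differentiable ℝ (φ i)) (p : E × U)
    (c : ι → ℝ) :
    gradPairing φ f p c = fderiv ℝ (fun z => ∑ i, c i * φ i z) p.1 (f p.2 p.1) := by
  rw [fderiv_sum_mul_apply fun i => hφ i _]
  simp [gradPairing, mul_comm]

theorem continuous_gradPairing [TopologicalSpace U] {φ : ι → E → ℝ} (hφ : ∀ i, ContDiff ℝ 1 (φ i))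
    (hf : Continuous fun p : U × E => f p.1 p.2) : Continuous (gradPairing φ f) :=
  continuous_finsetSum _ fun i _ =>
    ((hφ i).continuous_fderiv_apply_comp hf).smul continuous_const

theorem sInf_image_iInf_fderiv_sum_add_eq [TopologicalSpace U] [CompactSpace U] {Y : Set E}
    (hY : IsCompact Y) {φ : ι → E → ℝ} (hφ : ∀ i, ContDiff ℝ 1 (φ i))
    (hf : Continuous fun p : U × E => f p.1 p.2) {g : U → E → ℝ}
    (hg : Continuous fun p : U × E => g p.1 p.2) (c : ι → ℝ) :
    sInf ((fun y => ⨅ u, fderiv ℝ (fun z => ∑ i, c i * φ i z) y (f u y) + g u y) '' Y) =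
      ⨅ p : Y × U, gradPairing φ f (p.1, p.2) c + g p.2 p.1 := by
  have hψ : ContDiff ℝ 1 fun z => ∑ i, c i * φ i z :=
    ContDiff.sum fun i _ => contDiff_const.mul (hφ i)
  have hG : Continuous fun p : E × U =>
      fderiv ℝ (fun z => ∑ i, c i * φ i z) p.1 (f p.2 p.1) + g p.2 p.1 :=
    (hψ.continuous_fderiv_apply_comp hf).add (hg.comp continuous_swap)
  rw [sInf_image_iInf_eq_iInf_prod hY hG]
  simp only [gradPairing_apply fun i => (hφ i).differentiable one_ne_zero]

end GradPairing

/-- Lemma 1: If `∇ψᵀ f ≥ 0 on U×Y ⟹ ψ = 0` for ψ in the span of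
φ₁,…,φ_N, then the N-approximating maximin problem attains its supremum at some
ψᴺ = Σ λᴺᵢ φᵢ. -/
theorem stmt5 {m N : ℕ} {U : Type*} [MetricSpace U] [CompactSpace U] [Nonempty U]
    (Y : Set (EuclideanSpace ℝ (Fin m))) (hY : IsCompact Y) (hYne : Y.Nonempty)
    (f : U → EuclideanSpace ℝ (Fin m) → EuclideanSpace ℝ (Fin m))
    (g : U → EuclideanSpace ℝ (Fin m) → ℝ)
    (hf : Continuous fun p : U × EuclideanSpace ℝ (Fin m) => f p.1 p.2)
    (hg : Continuous fun p : U × EuclideanSpace ℝ (Fin m) => g p.1 p.2)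
    (φ : Fin N → EuclideanSpace ℝ (Fin m) → ℝ) (hφ : ∀ i, ContDiff ℝ 1 (φ i))
    -- the nondegeneracy condition: ∇ψᵀ f ≥ 0 on U×Y with ψ in the span forces v = 0
    (hpos : ∀ v : Fin N → ℝ,
      (∀ u : U, ∀ y ∈ Y, 0 ≤ fderiv ℝ (fun z => ∑ i, v i * φ i z) y (f u y)) → v = 0)
    -- J ψ = min_{y ∈ Y} H(∇ψ(y), y)
    (J : (EuclideanSpace ℝ (Fin m) → ℝ) → ℝ)
    (hJ : J = fun ψ => sInf ((fun y => ⨅ u : U, (fderiv ℝ ψ y (f u y) + g u y)) '' Y))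
    (μN : ℝ)
    (hμN : μN = sSup (J '' {ψ | ∃ c : Fin N → ℝ, ψ = fun z => ∑ i, c i * φ i z})) :
    ∃ lam : Fin N → ℝ, J (fun z => ∑ i, lam i * φ i z) = μN := by
  have : CompactSpace Y := isCompact_iff_compactSpace.mp hY
  have : Nonempty Y := hYne.to_subtype
  have hJ_eq (c : Fin N → ℝ) : J (fun z => ∑ i, c i * φ i z) =
      ⨅ p : Y × U, gradPairing φ f (p.1, p.2) c + g p.2 p.1 := by
    rw [hJ]
    exact sInf_image_iInf_fderiv_sum_add_eq hY hφ hf hg c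
  have hincl : Continuous fun p : Y × U => ((p.1 : EuclideanSpace ℝ (Fin m)), p.2) :=
    (continuous_subtype_val.comp continuous_fst).prodMk continuous_snd
  have hdφ : ∀ i, Differentiable ℝ (φ i) := fun i => (hφ i).differentiable one_ne_zero
  obtain ⟨lam, hlam⟩ := exists_forall_iInf_apply_add_le
    (ℓ := fun p : Y × U => gradPairing φ f (p.1, p.2)) (b := fun p => g p.2 p.1)
    ((continuous_gradPairing hφ hf).comp hincl) ((hg.comp continuous_swap).comp hincl)
    fun c hc => hpos c fun u y hy => by simpa only [gradPairing_apply hdφ] using hc (⟨y, hy⟩, u)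
  have hgreatest : IsGreatest (J '' {ψ | ∃ c : Fin N → ℝ, ψ = fun z => ∑ i, c i * φ i z})
      (J fun z => ∑ i, lam i * φ i z) := by
    refine ⟨⟨_, ⟨lam, rfl⟩, rfl⟩, ?_⟩
    rintro _ ⟨_, ⟨c, rfl⟩, rfl⟩
    simpa only [hJ_eq] using hlam c
  exact ⟨lam, (hμN.trans hgreatest.csSup_eq).symm⟩
end

section
/- Suppose the minimization problem min_{γ∈W} ∫ g dγ over the weak*-compact convex set W ⊂ P(U×Y) has a unique optimal solution γ*, W_N ⊇ W are weak*-compact with ρ_H(W_N, W) → 0, and γᴺ is any optimal solution of min_{γ∈W_N} ∫ g dγ. Then γᴺ → γ* in the weak* topology as N → ∞. -/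
/-!
Since `W ⊆ W_N`, the distance from `γᴺ` to `W` is at most `ρ_H(W_N, W) → 0`, so `γᴺ` has a nearest
point `w_N ∈ W` with `ρ(γᴺ, w_N) → 0`. By compactness of `W`, every subsequence of `w_N` has a
further subsequence converging to some `w ∈ W`, and along it `γᴺ → w` too. As `γ* ∈ W_N`, optimality
gives `∫ g dγᴺ ≤ ∫ g dγ*`; in the limit `∫ g dw ≤ ∫ g dγ*`, so `w` is optimal over `W`, i.e. `w = γ*`.
-/

open MeasureTheory Set Filter Topology

section DistanceFunction

variable {α : Type*} {ρ : α → α → ℝ}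

noncomputable def infDistOf (ρ : α → α → ℝ) (x : α) (s : Set α) : ℝ := sInf (ρ x '' s)

noncomputable def hausdorffDistOf (ρ : α → α → ℝ) (s t : Set α) : ℝ :=
  max (sSup ((infDistOf ρ · t) '' s)) (sSup ((infDistOf ρ · s) '' t))

lemma infDistOf_le (hnonneg : ∀ x y, 0 ≤ ρ x y) {x y : α} {s : Set α} (hy : y ∈ s) :
    infDistOf ρ x s ≤ ρ x y :=
  csInf_le ⟨0, by rintro _ ⟨z, -, rfl⟩; exact hnonneg x z⟩ ⟨y, hy, rfl⟩

lemma infDistOf_le_hausdorffDistOf {s t : Set α} (hbdd : BddAbove (range (infDistOf ρ · t)))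
    {x : α} (hx : x ∈ s) : infDistOf ρ x t ≤ hausdorffDistOf ρ s t :=
  (le_csSup (hbdd.mono (image_subset_range _ _)) ⟨x, hx, rfl⟩).trans (le_max_left _ _)

variable [TopologicalSpace α]

lemma bddAbove_range_infDistOf [CompactSpace α] (hnonneg : ∀ x y, 0 ≤ ρ x y) {s : Set α}
    {y : α} (hy : y ∈ s) (hcont : Continuous (ρ · y)) : BddAbove (range (infDistOf ρ · s)) := by
  obtain ⟨C, hC⟩ := (isCompact_range hcont).bddAbove
  exact ⟨C, by rintro _ ⟨x, rfl⟩; exact (infDistOf_le hnonneg hy).trans (hC ⟨x, rfl⟩)⟩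

lemma IsCompact.exists_eq_infDistOf {s : Set α} (hs : IsCompact s) (hne : s.Nonempty) {x : α}
    (hcont : Continuous (ρ x)) : ∃ y ∈ s, ρ x y = infDistOf ρ x s :=
  (hs.image hcont).sInf_mem (hne.image _)

lemma continuous_left_of_tendsto_iff [SequentialSpace α] (hsymm : ∀ x y, ρ x y = ρ y x)
    (htriangle : ∀ x y z, ρ x z ≤ ρ x y + ρ y z)
    (hmetrizes : ∀ (u : ℕ → α) (x : α),
      Tendsto (fun n => ρ (u n) x) atTop (𝓝 0) ↔ Tendsto u atTop (𝓝 x))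
    (a : α) : Continuous (ρ · a) := by
  refine SeqContinuous.continuous fun u x hu => tendsto_iff_dist_tendsto_zero.2 <|
    squeeze_zero (fun _ => dist_nonneg) (fun n => ?_) ((hmetrizes u x).2 hu)
  rw [Function.comp_apply, Real.dist_eq, abs_sub_le_iff]
  constructor <;> linarith [htriangle (u n) x a, htriangle x (u n) a, hsymm x (u n)]

lemma tendsto_of_tendsto_dist_zero (hnonneg : ∀ x y, 0 ≤ ρ x y)
    (htriangle : ∀ x y z, ρ x z ≤ ρ x y + ρ y z)
    (hmetrizes : ∀ (u : ℕ → α) (x : α),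
      Tendsto (fun n => ρ (u n) x) atTop (𝓝 0) ↔ Tendsto u atTop (𝓝 x))
    {u v : ℕ → α} {x : α} (huv : Tendsto (fun n => ρ (u n) (v n)) atTop (𝓝 0))
    (hv : Tendsto v atTop (𝓝 x)) : Tendsto u atTop (𝓝 x) :=
  (hmetrizes u x).1 <| squeeze_zero (fun n => hnonneg _ _) (fun n => htriangle _ (v n) _)
    (by simpa using huv.add ((hmetrizes v x).2 hv))

lemma exists_tendsto_dist_zero_of_hausdorffDistOf [CompactSpace α] (hnonneg : ∀ x y, 0 ≤ ρ x y)
    (hsymm : ∀ x y, ρ x y = ρ y x) (hcont : ∀ a, Continuous (ρ · a))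
    {s : Set α} (hs : IsCompact s) (hne : s.Nonempty) {t : ℕ → Set α} {x : ℕ → α}
    (hx : ∀ n, x n ∈ t n) (ht : Tendsto (fun n => hausdorffDistOf ρ (t n) s) atTop (𝓝 0)) :
    ∃ w : ℕ → α, (∀ n, w n ∈ s) ∧ Tendsto (fun n => ρ (x n) (w n)) atTop (𝓝 0) := by
  have hcont' (a : α) : Continuous (ρ a) := by simpa only [hsymm _ a] using hcont a
  choose w hws hw using fun n => hs.exists_eq_infDistOf hne (hcont' (x n))
  obtain ⟨y, hy⟩ := hne
  have hbdd := bddAbove_range_infDistOf hnonneg hy (hcont y)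
  exact ⟨w, hws, squeeze_zero (fun n => hnonneg _ _)
    (fun n => (hw n).trans_le (infDistOf_le_hausdorffDistOf hbdd (hx n))) ht⟩

theorem IsCompact.tendsto_of_isMinOn_unique [FirstCountableTopology α] {G : α → ℝ}
    (hG : Continuous G) {W : Set α} (hW : IsCompact W) {z : α}
    (hmin : IsMinOn G W z) (huniq : ∀ y ∈ W, G y = G z → y = z)
    (hnonneg : ∀ x y, 0 ≤ ρ x y) (htriangle : ∀ x y z, ρ x z ≤ ρ x y + ρ y z)
    (hmetrizes : ∀ (u : ℕ → α) (x : α),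
      Tendsto (fun n => ρ (u n) x) atTop (𝓝 0) ↔ Tendsto u atTop (𝓝 x))
    {x w : ℕ → α} (hw : ∀ n, w n ∈ W) (hxw : Tendsto (fun n => ρ (x n) (w n)) atTop (𝓝 0))
    (hle : ∀ n, G (x n) ≤ G z) : Tendsto x atTop (𝓝 z) := by
  refine tendsto_of_subseq_tendsto fun ns hns => ?_
  obtain ⟨y, hyW, φ, hφ, hwy⟩ := hW.tendsto_subseq fun k => hw (ns k)
  have hxy : Tendsto (x ∘ ns ∘ φ) atTop (𝓝 y) :=
    tendsto_of_tendsto_dist_zero hnonneg htriangle hmetrizes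
      (hxw.comp (hns.comp hφ.tendsto_atTop)) hwy
  have hGy : G y ≤ G z := le_of_tendsto' ((hG.tendsto y).comp hxy) fun k => hle _
  obtain rfl := huniq y hyW (le_antisymm hGy (hmin hyW))
  exact ⟨φ, hxy⟩

end DistanceFunction

theorem stmt10_general {X : Type*} [MetricSpace X] [CompactSpace X]
    [MeasurableSpace X] [BorelSpace X]
    (g : X → ℝ) (hg : Continuous g)
    (ρ : ProbabilityMeasure X → ProbabilityMeasure X → ℝ)
    (hρ_symm : ∀ γ γ', ρ γ γ' = ρ γ' γ)
    (hρ_nonneg : ∀ γ γ', 0 ≤ ρ γ γ')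
    (hρ_triangle : ∀ γ γ' γ'', ρ γ γ'' ≤ ρ γ γ' + ρ γ' γ'')
    (hρ_metrizes : ∀ (s : ℕ → ProbabilityMeasure X) (γ : ProbabilityMeasure X),
      Tendsto (fun n => ρ (s n) γ) atTop (nhds 0) ↔ Tendsto s atTop (nhds γ))
    (ρS : ProbabilityMeasure X → Set (ProbabilityMeasure X) → ℝ)
    (hρS : ρS = fun γ Γ => sInf (ρ γ '' Γ))
    (ρH : Set (ProbabilityMeasure X) → Set (ProbabilityMeasure X) → ℝ)
    (hρH : ρH = fun Γ₁ Γ₂ => max (sSup ((fun γ => ρS γ Γ₂) '' Γ₁))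
      (sSup ((fun γ => ρS γ Γ₁) '' Γ₂)))
    (WN : ℕ → Set (ProbabilityMeasure X)) (W : Set (ProbabilityMeasure X))
    (hWc : IsCompact W) (hWne : W.Nonempty)
    (hsup : ∀ N, W ⊆ WN N)
    (hconv : Tendsto (fun N => ρH (WN N) W) atTop (nhds 0))
    -- γ* is the unique optimal solution over W
    (γstar : ProbabilityMeasure X) (hγstarW : γstar ∈ W)
    (hopt : ∀ γ ∈ W, ∫ x, g x ∂γstar.toMeasure ≤ ∫ x, g x ∂γ.toMeasure)
    (huniq : ∀ γ ∈ W, (∫ x, g x ∂γ.toMeasure = ∫ x, g x ∂γstar.toMeasure) → γ = γstar)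
    -- γᴺ are optimal solutions over W_N
    (γN : ℕ → ProbabilityMeasure X) (hγN : ∀ N, γN N ∈ WN N)
    (hγNopt : ∀ N, ∀ γ ∈ WN N, ∫ x, g x ∂(γN N).toMeasure ≤ ∫ x, g x ∂γ.toMeasure) :
    Tendsto γN atTop (nhds γstar) := by
  subst hρS hρH
  have hcont := continuous_left_of_tendsto_iff hρ_symm hρ_triangle hρ_metrizes
  obtain ⟨w, hwW, hw⟩ :=
    exists_tendsto_dist_zero_of_hausdorffDistOf hρ_nonneg hρ_symm hcont hWc hWne hγN hconv
  have hG : Continuous fun γ : ProbabilityMeasure X => ∫ x, g x ∂γ.toMeasure := by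
    simpa using ProbabilityMeasure.continuous_integral_boundedContinuousFunction
      (BoundedContinuousFunction.mkOfCompact ⟨g, hg⟩)
  exact hWc.tendsto_of_isMinOn_unique hG hopt huniq hρ_nonneg hρ_triangle hρ_metrizes
    hwW hw fun N => hγNopt N γstar (hsup N hγstarW)

/-- If the minimization of ∫g over the weak*-compact convex set W has a
unique solution γ*, W_N ⊇ W are weak*-compact with ρ_H(W_N, W) → 0, and γᴺ are
optimal in W_N, then γᴺ → γ* in the weak* topology. -/
theorem stmt10 {X : Type*} [MetricSpace X] [CompactSpace X]
    [MeasurableSpace X] [BorelSpace X]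
    (g : X → ℝ) (hg : Continuous g)
    (ρ : ProbabilityMeasure X → ProbabilityMeasure X → ℝ)
    (hρ_symm : ∀ γ γ', ρ γ γ' = ρ γ' γ)
    (hρ_nonneg : ∀ γ γ', 0 ≤ ρ γ γ')
    (hρ_triangle : ∀ γ γ' γ'', ρ γ γ'' ≤ ρ γ γ' + ρ γ' γ'')
    (hρ_eq : ∀ γ γ', ρ γ γ' = 0 ↔ γ = γ')
    (hρ_metrizes : ∀ (s : ℕ → ProbabilityMeasure X) (γ : ProbabilityMeasure X),
      Tendsto (fun n => ρ (s n) γ) atTop (nhds 0) ↔ Tendsto s atTop (nhds γ))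
    (ρS : ProbabilityMeasure X → Set (ProbabilityMeasure X) → ℝ)
    (hρS : ρS = fun γ Γ => sInf (ρ γ '' Γ))
    (ρH : Set (ProbabilityMeasure X) → Set (ProbabilityMeasure X) → ℝ)
    (hρH : ρH = fun Γ₁ Γ₂ => max (sSup ((fun γ => ρS γ Γ₂) '' Γ₁))
      (sSup ((fun γ => ρS γ Γ₁) '' Γ₂)))
    (WN : ℕ → Set (ProbabilityMeasure X)) (W : Set (ProbabilityMeasure X))
    (hWNc : ∀ N, IsCompact (WN N)) (hWc : IsCompact W) (hWne : W.Nonempty)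
    (hWconvex : ∀ γ₁ ∈ W, ∀ γ₂ ∈ W, ∀ a : NNReal, a ≤ 1 →
      ∀ γ₃ : ProbabilityMeasure X,
        γ₃.toMeasure = a • γ₁.toMeasure + (1 - a) • γ₂.toMeasure → γ₃ ∈ W)
    (hsup : ∀ N, W ⊆ WN N)
    (hconv : Tendsto (fun N => ρH (WN N) W) atTop (nhds 0))
    -- γ* is the unique optimal solution over W
    (γstar : ProbabilityMeasure X) (hγstarW : γstar ∈ W)
    (hopt : ∀ γ ∈ W, ∫ x, g x ∂γstar.toMeasure ≤ ∫ x, g x ∂γ.toMeasure)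
    (huniq : ∀ γ ∈ W, (∫ x, g x ∂γ.toMeasure = ∫ x, g x ∂γstar.toMeasure) → γ = γstar)
    -- γᴺ are optimal solutions over W_N
    (γN : ℕ → ProbabilityMeasure X) (hγN : ∀ N, γN N ∈ WN N)
    (hγNopt : ∀ N, ∀ γ ∈ WN N, ∫ x, g x ∂(γN N).toMeasure ≤ ∫ x, g x ∂γ.toMeasure) :
    Tendsto γN atTop (nhds γstar) :=
  stmt10_general g hg ρ hρ_symm hρ_nonneg hρ_triangle hρ_metrizes ρS hρS ρH hρH WN W hWc hWne hsup
    hconv γstar hγstarW hopt huniq γN hγN hγNopt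
end

section
/- Let γ* be a probability measure on a compact metric space X, and Θ* a set whose closure satisfies: for every x̄ ∈ cl Θ* and every r > 0, γ*(B_r(x̄)) > 0 (B_r denotes the open r-ball intersected with X). Let γᴺ → γ* weakly, where each γᴺ is supported on a finite set Θ_N ⊂ X. Then sup_{x∈Θ*} d(x, Θ_N) → 0 as N → ∞. -/
/-!
Cover the compact set `closure Θ*` by finitely many balls of radius `ε / 2` centred in it.
Each of them has positive `γ*`-mass, so by the portmanteau theorem it has positive `γᴺ`-mass
for all large `N`, hence meets the support `Θ_N`. Every point of `Θ*` then lies within `ε` of `Θ_N`.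
-/

open MeasureTheory Set Filter Topology Metric

theorem ProbabilityMeasure.eventually_measure_pos_of_tendsto {Ω ι : Type*} {L : Filter ι}
    [MeasurableSpace Ω] [TopologicalSpace Ω] [OpensMeasurableSpace Ω] [HasOuterApproxClosed Ω]
    {μ : ProbabilityMeasure Ω} {μs : ι → ProbabilityMeasure Ω} (μs_lim : Tendsto μs L (𝓝 μ))
    {G : Set Ω} (G_open : IsOpen G) (hG : 0 < (μ : Measure Ω) G) :
    ∀ᶠ i in L, 0 < (μs i : Measure Ω) G :=
  eventually_lt_of_lt_liminf <|
    hG.trans_le (ProbabilityMeasure.le_liminf_measure_open_of_tendsto μs_lim G_open)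

theorem eventually_forall_infDist_lt_of_tendsto {X ι : Type*} {L : Filter ι}
    [PseudoMetricSpace X] [MeasurableSpace X] [OpensMeasurableSpace X]
    {μ : ProbabilityMeasure X} {μs : ι → ProbabilityMeasure X} (μs_lim : Tendsto μs L (𝓝 μ))
    {K : Set X} (hK : IsCompact K) (hcharge : ∀ x ∈ K, ∀ r > (0 : ℝ), 0 < (μ : Measure X) (ball x r))
    {S : ι → Set X} (hsupp : ∀ i, (μs i : Measure X) (S i)ᶜ = 0) {ε : ℝ} (hε : 0 < ε) :
    ∀ᶠ i in L, ∀ x ∈ K, infDist x (S i) < ε := by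
  obtain ⟨t, htK, ht, hcover⟩ := hK.finite_cover_balls (half_pos hε)
  have hcharged : ∀ᶠ i in L, ∀ y ∈ t, 0 < (μs i : Measure X) (ball y (ε / 2)) :=
    ht.eventually_all.2 fun y hy ↦ ProbabilityMeasure.eventually_measure_pos_of_tendsto μs_lim
      isOpen_ball (hcharge y (htK hy) _ (half_pos hε))
  filter_upwards [hcharged] with i hi x hx
  obtain ⟨y, hy, hxy⟩ := mem_iUnion₂.1 (hcover hx)
  obtain ⟨z, hzy, hzS⟩ : (ball y (ε / 2) ∩ S i).Nonempty :=
    nonempty_of_measure_ne_zero <| by rw [measure_inter_conull (hsupp i)]; exact (hi y hy).ne'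
  calc infDist x (S i) ≤ dist x z := infDist_le_dist_of_mem hzS
    _ ≤ dist x y + dist z y := dist_triangle_right x z y
    _ < ε / 2 + ε / 2 := add_lt_add (mem_ball.1 hxy) (mem_ball.1 hzy)
    _ = ε := add_halves ε

theorem tendsto_sSup_image_zero_of_eventually_forall_lt {α ι : Type*} {L : Filter ι} {s : Set α}
    {f : ι → α → ℝ} (hf : ∀ i x, 0 ≤ f i x) (h : ∀ ε > 0, ∀ᶠ i in L, ∀ x ∈ s, f i x < ε) :
    Tendsto (fun i ↦ sSup (f i '' s)) L (𝓝 0) := by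
  refine Metric.tendsto_nhds.2 fun ε hε ↦ ?_
  filter_upwards [h (ε / 2) (half_pos hε)] with i hi
  have hnonneg : 0 ≤ sSup (f i '' s) := Real.sSup_nonneg (forall_mem_image.2 fun x _ ↦ hf i x)
  have hle : sSup (f i '' s) ≤ ε / 2 :=
    Real.sSup_le (forall_mem_image.2 fun x hx ↦ (hi x hx).le) (half_pos hε).le
  rw [Real.dist_eq, sub_zero, abs_of_nonneg hnonneg]
  linarith

/-- If γ* charges every ball centered at points of cl Θ*, γᴺ → γ*
weakly, and each γᴺ is supported on a finite set Θ_N, then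
sup_{x∈Θ*} d(x, Θ_N) → 0. -/
theorem stmt12 {X : Type*} [MetricSpace X] [CompactSpace X]
    [MeasurableSpace X] [BorelSpace X]
    (γstar : ProbabilityMeasure X) (Θstar : Set X)
    (hcharge : ∀ x ∈ closure Θstar, ∀ r > (0:ℝ), 0 < γstar.toMeasure (Metric.ball x r))
    (γN : ℕ → ProbabilityMeasure X) (ΘN : ℕ → Finset X)
    (hsupp : ∀ n, (γN n).toMeasure ((↑(ΘN n) : Set X)ᶜ) = 0)
    (hweak : Tendsto γN atTop (nhds γstar)) :
    Tendsto (fun n => sSup ((fun x => Metric.infDist x (↑(ΘN n) : Set X)) '' Θstar))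
      atTop (nhds 0) := by
  refine tendsto_sSup_image_zero_of_eventually_forall_lt (fun _ _ ↦ infDist_nonneg) ?_
  intro ε hε
  filter_upwards [eventually_forall_infDist_lt_of_tendsto hweak isClosed_closure.isCompact
    hcharge hsupp hε] with n hn x hx
  exact hn x (subset_closure hx)
end

section
/- In the setting of the previous statement, if additionally a(𝔛) = λ₀(𝔛), then the discrete measure γ = Σⱼ₌₁^{N+1} γⱼ(𝔛) δ_{xⱼ} is an optimal solution of the semi-infinite LP problem (its value ∫g dγ equals G*_N), and min_{x∈X}(g(x) + Σᵢ hᵢ(x)λᵢ(𝔛)) = G*_N, i.e. λ(𝔛) solves the dual problem. -/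
/-!
Integrating the pointwise bound `g + ∑ hᵢ λᵢ ≥ a(𝔛) = λ₀` against any feasible probability
measure gives weak duality `∫ g ≥ λ₀`. The discrete measure `∑ γⱼ δ_{xⱼ}` is feasible, and by the
dual equations `λ₀ - ∑ hᵢ(xⱼ) λᵢ = g(xⱼ)` and its feasibility its value is exactly `λ₀`, so it attains `G*_N = λ₀`.
-/

open MeasureTheory Set

section DiscreteMeasure

variable {α ι : Type*} [MeasurableSpace α] [Fintype ι]

theorem isProbabilityMeasure_sum_smul_dirac (x : ι → α) {γ : ι → ℝ} (hγ : ∀ j, 0 ≤ γ j)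
    (hγ1 : ∑ j, γ j = 1) :
    IsProbabilityMeasure (∑ j, ENNReal.ofReal (γ j) • Measure.dirac (x j)) := by
  constructor
  simp only [Measure.finsetSum_apply, Measure.smul_apply, measure_univ, smul_eq_mul, mul_one]
  rw [← ENNReal.ofReal_sum_of_nonneg fun j _ => hγ j, hγ1, ENNReal.ofReal_one]

theorem integral_sum_smul_dirac [MeasurableSingletonClass α] (x : ι → α) {γ : ι → ℝ}
    (hγ : ∀ j, 0 ≤ γ j) (φ : α → ℝ) :
    ∫ a, φ a ∂(∑ j, ENNReal.ofReal (γ j) • Measure.dirac (x j)) = ∑ j, γ j * φ (x j) := by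
  rw [integral_finsetSum_measure fun j _ =>
    (integrable_dirac enorm_lt_top).smul_measure ENNReal.ofReal_ne_top]
  refine Finset.sum_congr rfl fun j _ => ?_
  rw [integral_smul_measure, integral_dirac, ENNReal.toReal_ofReal (hγ j), smul_eq_mul]

end DiscreteMeasure

section Lagrangian

variable {X ι : Type*} [Fintype ι]

theorem sum_mul_eq_of_dual_eq {κ : Type*} [Fintype κ] (g : X → ℝ) (h : ι → X → ℝ)
    (x : κ → X) {γ : κ → ℝ} (hγ1 : ∑ j, γ j = 1) (hγ0 : ∀ i, ∑ j, h i (x j) * γ j = 0)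
    {lam0 : ℝ} {lam : ι → ℝ} (hdual : ∀ j, lam0 - ∑ i, h i (x j) * lam i = g (x j)) :
    ∑ j, γ j * g (x j) = lam0 := by
  calc ∑ j, γ j * g (x j)
      = lam0 * ∑ j, γ j - ∑ i, (∑ j, h i (x j) * γ j) * lam i := by
        simp only [← hdual, mul_sub, Finset.sum_sub_distrib, Finset.mul_sum, Finset.sum_mul]
        rw [Finset.sum_comm]
        congr 1
        · exact Finset.sum_congr rfl fun _ _ => mul_comm _ _
        · exact Finset.sum_congr rfl fun _ _ => Finset.sum_congr rfl fun _ _ => by ring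
    _ = lam0 := by simp [hγ1, hγ0]

variable [TopologicalSpace X] [CompactSpace X] [MeasurableSpace X] [OpensMeasurableSpace X]

theorem Continuous.integrable_of_compactSpace {f : X → ℝ} (hf : Continuous f) (μ : Measure X)
    [IsFiniteMeasure μ] : Integrable f μ :=
  (BoundedContinuousFunction.mkOfCompact ⟨f, hf⟩).integrable μ

theorem sInf_range_lagrangian_le_integral {g : X → ℝ} {h : ι → X → ℝ} (hg : Continuous g)
    (hh : ∀ i, Continuous (h i)) (lam : ι → ℝ) (μ : Measure X) [IsProbabilityMeasure μ]
    (hμ : ∀ i, ∫ x, h i x ∂μ = 0) :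
    sInf (range fun x => g x + ∑ i, h i x * lam i) ≤ ∫ x, g x ∂μ := by
  have hpen : Continuous fun x => ∑ i, h i x * lam i :=
    continuous_finsetSum _ fun i _ => (hh i).mul continuous_const
  have hlag_int : ∫ x, g x + ∑ i, h i x * lam i ∂μ = ∫ x, g x ∂μ := by
    rw [integral_add (hg.integrable_of_compactSpace μ) (hpen.integrable_of_compactSpace μ),
      integral_finsetSum _ fun i _ => ((hh i).integrable_of_compactSpace μ).mul_const _]
    simp [integral_mul_const, hμ]
  calc sInf (range fun x => g x + ∑ i, h i x * lam i)
      = ∫ _, sInf (range fun x => g x + ∑ i, h i x * lam i) ∂μ := by simp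
    _ ≤ ∫ x, g x + ∑ i, h i x * lam i ∂μ :=
        integral_mono (integrable_const _) ((hg.add hpen).integrable_of_compactSpace μ)
          fun x => csInf_le (isCompact_range (hg.add hpen)).bddBelow ⟨x, rfl⟩
    _ = ∫ x, g x ∂μ := hlag_int

end Lagrangian

theorem stmt18_general {N : ℕ} {X : Type*} [MetricSpace X] [CompactSpace X]
    [MeasurableSpace X] [BorelSpace X]
    (g : X → ℝ) (h : Fin N → X → ℝ)
    (hg : Continuous g) (hh : ∀ i, Continuous (h i))
    (GN : ℝ)
    (hGN : GN = sInf {c | ∃ μ : ProbabilityMeasure X,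
      (∀ i, ∫ x, h i x ∂μ.toMeasure = 0) ∧ c = ∫ x, g x ∂μ.toMeasure})
    (x : Fin (N + 1) → X)
    (γ : Fin (N + 1) → ℝ) (hγnn : ∀ j, 0 ≤ γ j)
    (hγ1 : ∑ j, γ j = 1)
    (hγ0 : ∀ i : Fin N, ∑ j, h i (x j) * γ j = 0)
    (lam0 : ℝ) (lam : Fin N → ℝ)
    (hdual : ∀ j : Fin (N + 1), lam0 - ∑ i, h i (x j) * lam i = g (x j))
    -- the additional assumption a(𝔛) = λ₀(𝔛)
    (heq : sInf (Set.range fun x' => g x' + ∑ i, h i x' * lam i) = lam0) :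
    (∑ j, γ j * g (x j) = GN) ∧
    (∫ x', g x' ∂(∑ j, ENNReal.ofReal (γ j) • Measure.dirac (x j)) = GN) ∧
    sInf (Set.range fun x' => g x' + ∑ i, h i x' * lam i) = GN := by
  set ν : Measure X := ∑ j, ENNReal.ofReal (γ j) • Measure.dirac (x j)
  have hν : IsProbabilityMeasure ν := isProbabilityMeasure_sum_smul_dirac x hγnn hγ1
  have hvalue : ∑ j, γ j * g (x j) = lam0 := sum_mul_eq_of_dual_eq g h x hγ1 hγ0 hdual
  have hνg : ∫ x', g x' ∂ν = lam0 := by rw [integral_sum_smul_dirac x hγnn, hvalue]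
  have hνh : ∀ i, ∫ x', h i x' ∂ν = 0 := fun i => by
    simp only [ν, integral_sum_smul_dirac x hγnn, mul_comm (γ _), hγ0]
  have hGN_eq : GN = lam0 := by
    rw [hGN]
    refine IsLeast.csInf_eq ⟨⟨⟨ν, hν⟩, hνh, hνg.symm⟩, ?_⟩
    rintro _ ⟨μ, hμ, rfl⟩
    exact heq ▸ sInf_range_lagrangian_le_integral hg hh lam μ hμ
  exact ⟨hvalue.trans hGN_eq.symm, hνg.trans hGN_eq.symm, heq.trans hGN_eq.symm⟩

/-- Corollary of Lemma 8.1: If additionally a(𝔛) = λ₀(𝔛), then the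
discrete measure Σⱼ γⱼ(𝔛) δ_{xⱼ} is an optimal solution of the SILP (its value
Σⱼ g(xⱼ)γⱼ(𝔛) equals G*_N) and λ(𝔛) solves the dual problem:
min_x(g(x) + Σᵢ hᵢ(x)λᵢ(𝔛)) = G*_N. -/
theorem stmt18 {N : ℕ} {X : Type*} [MetricSpace X] [CompactSpace X] [Nonempty X]
    [MeasurableSpace X] [BorelSpace X]
    (g : X → ℝ) (h : Fin N → X → ℝ)
    (hg : Continuous g) (hh : ∀ i, Continuous (h i))
    (GN : ℝ)
    (hGN : GN = sInf {c | ∃ μ : ProbabilityMeasure X,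
      (∀ i, ∫ x, h i x ∂μ.toMeasure = 0) ∧ c = ∫ x, g x ∂μ.toMeasure})
    (hfeas : ∃ μ : ProbabilityMeasure X, ∀ i, ∫ x, h i x ∂μ.toMeasure = 0)
    (hstrong : ∃ lamBar : Fin N → ℝ,
      GN = sInf (Set.range fun x' => g x' + ∑ i, h i x' * lamBar i))
    (x : Fin (N + 1) → X)
    (γ : Fin (N + 1) → ℝ) (hγnn : ∀ j, 0 ≤ γ j)
    (hγ1 : ∑ j, γ j = 1)
    (hγ0 : ∀ i : Fin N, ∑ j, h i (x j) * γ j = 0)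
    (lam0 : ℝ) (lam : Fin N → ℝ)
    (hdual : ∀ j : Fin (N + 1), lam0 - ∑ i, h i (x j) * lam i = g (x j))
    -- the additional assumption a(𝔛) = λ₀(𝔛)
    (heq : sInf (Set.range fun x' => g x' + ∑ i, h i x' * lam i) = lam0) :
    (∑ j, γ j * g (x j) = GN) ∧
    (∫ x', g x' ∂(∑ j, ENNReal.ofReal (γ j) • Measure.dirac (x j)) = GN) ∧
    sInf (Set.range fun x' => g x' + ∑ i, h i x' * lam i) = GN :=
  stmt18_general g h hg hh GN hGN x γ hγnn hγ1 hγ0 lam0 lam hdual heq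
end
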